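/- arXiv:2309.12694 — 3 statements merged into one kernel-verified Lean document; each statement's English description precedes it below -/
import Mathlib

section
/- For a connected temporal graph whose underlying static graph at each time is vertex-transitive (such as a circular skip link graph) with all node and edge features zero, the Temporal 1-WL test assigns the same color to all nodes at every refinement iteration and every time step; consequently, Temporal 1-WL cannot distinguish two such temporal graphs on the same number of nodes with the same multiset of event timestamps per node. -/
/-- A temporal graph on node type `V`: a finite set of timed edge events. -/
structure TemporalGraph (V : Type) where
  events : Finset (V × V × ℕ)

/-- The multiset of (neighbor, event time) pairs of `u` over events up to time `t`. -/
def nbrs {V : Type} [DecidableEq V] (G : TemporalGraph V) (t : ℕ) (u : V) :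
    Multiset (V × ℕ) :=
  (G.events.filter (fun e => e.1 = u ∧ e.2.2 ≤ t)).val.map (fun e => (e.2.1, e.2.2))

/-- Canonical color type for the Temporal 1-WL test (an injective hash is modeled by
the canonical nested-multiset color). -/
def ColorT : ℕ → Type
  | 0 => Unit
  | k + 1 => ColorT k × Multiset (ColorT k × ℕ)

/-- Temporal 1-WL color refinement at time `t`: the color of `u` at iteration `k+1` is
the (injective) pairing of its previous color with the multiset of
(neighbor color, event time) pairs over all edge events up to time `t`. -/
def wlColor {V : Type} [DecidableEq V] (G : TemporalGraph V) (t : ℕ) :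
    (k : ℕ) → V → ColorT k
  | 0, _ => ()
  | k + 1, u =>
      (wlColor G t k u, (nbrs G t u).map (fun p => (wlColor G t k p.1, p.2)))

/-- A temporal automorphism of a temporal graph. -/
def IsTempAutomorphism {V : Type} (G : TemporalGraph V) (σ : Equiv.Perm V) : Prop :=
  ∀ (u v : V) (s : ℕ), (u, v, s) ∈ G.events ↔ (σ u, σ v, s) ∈ G.events

/-- A temporal graph is vertex-transitive if its temporal automorphism group acts
transitively on the nodes. -/
def VertexTransitive {V : Type} (G : TemporalGraph V) : Prop :=
  ∀ u v : V, ∃ σ : Equiv.Perm V, IsTempAutomorphism G σ ∧ σ u = v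

/-!
A temporal automorphism carries the (neighbor, time) multiset of `u` to that of `σ u`, so by
induction it preserves every 1-WL color; by vertex-transitivity each color level is therefore
constant. Once a level is constant, the next level of `u` only records the multiset of event
times at `u`, assumed to be the same for every node of either graph.
-/

def eventPerm {V : Type} (σ : Equiv.Perm V) : Equiv.Perm (V × V × ℕ) :=
  σ.prodCongr (σ.prodCongr (Equiv.refl ℕ))

section Automorphism

variable {V : Type} {G : TemporalGraph V} {σ : Equiv.Perm V}

theorem IsTempAutomorphism.events_map (hσ : IsTempAutomorphism G σ) :
    G.events.map (eventPerm σ).toEmbedding = G.events := by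
  ext ⟨u, v, s⟩
  rw [Finset.mem_map_equiv]
  simpa [eventPerm] using hσ (σ.symm u) (σ.symm v) s

variable [DecidableEq V]

theorem IsTempAutomorphism.nbrs_apply (hσ : IsTempAutomorphism G σ) (t : ℕ) (u : V) :
    nbrs G t (σ u) = (nbrs G t u).map (fun p => (σ p.1, p.2)) := by
  have hsource : (fun e => e.1 = σ u ∧ e.2.2 ≤ t) ∘ (eventPerm σ).toEmbedding =
      fun e => e.1 = u ∧ e.2.2 ≤ t := by
    ext e
    simp [eventPerm]
  conv_lhs => rw [nbrs, ← hσ.events_map, Finset.filter_map]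
  simp only [hsource, nbrs, Finset.map_val, Multiset.map_map]
  rfl

theorem IsTempAutomorphism.wlColor_apply (hσ : IsTempAutomorphism G σ) (t k : ℕ) (u : V) :
    wlColor G t k (σ u) = wlColor G t k u := by
  induction k generalizing u with
  | zero => rfl
  | succ k ih =>
    simp only [wlColor, ih, hσ.nbrs_apply, Multiset.map_map, Function.comp_def]
    rfl

end Automorphism

section Refinement

variable {V : Type} [DecidableEq V] {G : TemporalGraph V} {t : ℕ}

theorem VertexTransitive.wlColor_eq (h : VertexTransitive G) (k : ℕ) (u v : V) :
    wlColor G t k u = wlColor G t k v := by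
  obtain ⟨σ, hσ, rfl⟩ := h u v
  exact (hσ.wlColor_apply t k u).symm

theorem wlColor_succ_of_forall_eq {k : ℕ} {u : V}
    (hk : ∀ w, wlColor G t k w = wlColor G t k u) :
    wlColor G t (k + 1) u =
      (wlColor G t k u, ((nbrs G t u).map Prod.snd).map (wlColor G t k u, ·)) := by
  simp only [wlColor, Multiset.map_map, Function.comp_def, hk]
  rfl

end Refinement

theorem stmt4_general {V : Type} [DecidableEq V]
    (G₁ G₂ : TemporalGraph V) (t : ℕ)
    (h₁ : VertexTransitive G₁) (h₂ : VertexTransitive G₂)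
    (htimes : ∀ u v : V,
      (nbrs G₁ t u).map Prod.snd = (nbrs G₂ t v).map Prod.snd) :
    (∀ (k : ℕ) (u v : V), wlColor G₁ t k u = wlColor G₁ t k v) ∧
    (∀ (k : ℕ) (u v : V), wlColor G₂ t k u = wlColor G₂ t k v) ∧
    (∀ (k : ℕ) (u v : V), wlColor G₁ t k u = wlColor G₂ t k v) := by
  refine ⟨h₁.wlColor_eq, h₂.wlColor_eq, fun k => ?_⟩
  induction k with
  | zero => intro _ _; rfl
  | succ k ih =>
    intro u v
    rw [wlColor_succ_of_forall_eq (h₁.wlColor_eq k · u),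
      wlColor_succ_of_forall_eq (h₂.wlColor_eq k · v), htimes u v, ih u v]

/-- For connected vertex-transitive temporal graphs with zero features, the Temporal 1-WL
test assigns the same color to all nodes at every refinement iteration and every time;
consequently it cannot distinguish two such graphs on the same node set with the same
multiset of incident event timestamps per node. -/
theorem stmt4 {V : Type} [DecidableEq V] [Fintype V]
    (G₁ G₂ : TemporalGraph V) (t : ℕ)
    (h₁ : VertexTransitive G₁) (h₂ : VertexTransitive G₂)
    (htimes : ∀ u v : V,
      (nbrs G₁ t u).map Prod.snd = (nbrs G₂ t v).map Prod.snd) :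
    (∀ (k : ℕ) (u v : V), wlColor G₁ t k u = wlColor G₁ t k v) ∧
    (∀ (k : ℕ) (u v : V), wlColor G₂ t k u = wlColor G₂ t k v) ∧
    (∀ (k : ℕ) (u v : V), wlColor G₁ t k u = wlColor G₂ t k v) :=
  stmt4_general G₁ G₂ t h₁ h₂ htimes
end

section
/- The two Oscillating CSL temporal graphs—one evolving C_{N,s_1} → C_{N,s_2} → C_{N,s_1} → ... and the other C_{N,s_2} → C_{N,s_1} → C_{N,s_2} → ... over timestamps t_1,...,t_n with s_1 ≠ s_2 and the two static prototypes non-isomorphic—are non-isomorphic as temporal graphs, yet for every node u in the first graph and every node u' in the second, the multisets of (neighbor relation type, event time) pairs are equal, so Temporal 1-WL declares them indistinguishable. -/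
/-- Neighbors of `u` in the circular skip link graph C_{N,s}: cycle neighbors `u ± 1`
and skip neighbors `u ± s`. -/
def cslNbrs {N : ℕ} (s : ℕ) (u : ZMod N) : Finset (ZMod N) :=
  {u + 1, u - 1, u + (s : ZMod N), u - (s : ZMod N)}

/-- All edge events of one snapshot of C_{N,s} added simultaneously at timestamp `m`. -/
def cslEvents (N : ℕ) [NeZero N] (s m : ℕ) : Finset (ZMod N × ZMod N × ℕ) :=
  Finset.univ.biUnion (fun u : ZMod N => (cslNbrs s u).image (fun v => (u, v, m)))

/-- The Oscillating CSL temporal graph with timestamps `1, …, n`: at odd timestamps all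
edges of C_{N,s₁} are added, at even timestamps all edges of C_{N,s₂}. -/
def oscGraph (N : ℕ) [NeZero N] (s₁ s₂ n : ℕ) : TemporalGraph (ZMod N) :=
  ⟨(Finset.range n).biUnion
    (fun m => cslEvents N (if (m + 1) % 2 = 1 then s₁ else s₂) (m + 1))⟩

/-!
At every timestamp each node of either graph gains exactly its neighbours in one of the two
prototypes, and the prototypes have the same degree, so all nodes of both graphs see the same
multiset of event times. Temporal 1-WL starts from a constant colouring and, by induction, stays
constant: the refined colour only sees that multiset, each time tagged with the one common colour.
A temporal isomorphism, on the other hand, restricts at time 1 to an isomorphism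
C_{N,s₁} ≅ C_{N,s₂}.
-/

open Finset

section TemporalWL

variable {V V' : Type} [DecidableEq V] [DecidableEq V']

lemma count_map_snd_nbrs (G : TemporalGraph V) (t : ℕ) (u : V) (t₀ : ℕ) :
    ((nbrs G t u).map Prod.snd).count t₀
      = #{e ∈ G.events | e.1 = u ∧ e.2.2 = t₀ ∧ t₀ ≤ t} := by
  rw [nbrs, Multiset.map_map, Multiset.count_map, Finset.card_def, Finset.filter_val,
    Finset.filter_val, Multiset.filter_filter]
  congr 1
  refine Multiset.filter_congr fun e _ => ?_
  simp only [Function.comp_apply]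
  constructor
  · rintro ⟨rfl, hu, h⟩; exact ⟨hu, rfl, h⟩
  · rintro ⟨hu, rfl, h⟩; exact ⟨rfl, hu, h⟩

theorem wlColor_eq_of_map_snd_nbrs_eq (G : TemporalGraph V) (G' : TemporalGraph V') (t : ℕ)
    (h : ∀ u u', (nbrs G t u).map Prod.snd = (nbrs G' t u').map Prod.snd) :
    ∀ (k : ℕ) (u : V) (u' : V'), wlColor G t k u = wlColor G' t k u' := by
  intro k
  induction k with
  | zero => intro _ _; rfl
  | succ k ih =>
    intro u u'
    have hG : (nbrs G t u).map (fun p => (wlColor G t k p.1, p.2))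
        = ((nbrs G t u).map Prod.snd).map (fun s => (wlColor G' t k u', s)) := by
      rw [Multiset.map_map]
      exact Multiset.map_congr rfl fun p _ => by rw [ih p.1 u']; rfl
    have hG' : (nbrs G' t u').map (fun p => (wlColor G' t k p.1, p.2))
        = ((nbrs G' t u').map Prod.snd).map (fun s => (wlColor G' t k u', s)) := by
      rw [Multiset.map_map]
      exact Multiset.map_congr rfl fun p _ => by rw [← ih u p.1, ih u u']; rfl
    exact Prod.ext (ih u u') (hG.trans ((h u u').symm ▸ hG'.symm))

end TemporalWL

section OscillatingCSL

variable {N : ℕ} [NeZero N]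

lemma mem_cslEvents {s m : ℕ} {u v : ZMod N} {t : ℕ} :
    (u, v, t) ∈ cslEvents N s m ↔ v ∈ cslNbrs s u ∧ t = m := by
  simp only [cslEvents, Finset.mem_biUnion, Finset.mem_univ, true_and, Finset.mem_image,
    Prod.mk.injEq]
  constructor
  · rintro ⟨_, w, hw, rfl, rfl, rfl⟩; exact ⟨hw, rfl⟩
  · rintro ⟨hv, rfl⟩; exact ⟨u, v, hv, rfl, rfl, rfl⟩

lemma mem_oscGraph_events {a b n : ℕ} {u v : ZMod N} {m : ℕ} :
    (u, v, m) ∈ (oscGraph N a b n).events ↔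
      1 ≤ m ∧ m ≤ n ∧ v ∈ cslNbrs (if m % 2 = 1 then a else b) u := by
  simp only [oscGraph, Finset.mem_biUnion, Finset.mem_range, mem_cslEvents]
  constructor
  · rintro ⟨j, hj, hv, rfl⟩
    exact ⟨by omega, hj, hv⟩
  · rintro ⟨h1, h2, hv⟩
    exact ⟨m - 1, by omega, by rwa [Nat.sub_add_cancel h1], by omega⟩

lemma count_map_snd_nbrs_oscGraph (a b n : ℕ) (u : ZMod N) (t₀ : ℕ) :
    ((nbrs (oscGraph N a b n) n u).map Prod.snd).count t₀
      = if 1 ≤ t₀ ∧ t₀ ≤ n then #(cslNbrs (if t₀ % 2 = 1 then a else b) u) else 0 := by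
  rw [count_map_snd_nbrs]
  by_cases ht : 1 ≤ t₀ ∧ t₀ ≤ n
  · rw [if_pos ht]
    refine Finset.card_bij (fun e _ => e.2.1) ?_ ?_ ?_
    · rintro ⟨x, v, m⟩ he
      obtain ⟨hmem, rfl, rfl, -⟩ := Finset.mem_filter.mp he
      exact (mem_oscGraph_events.mp hmem).2.2
    · rintro ⟨x, v, m⟩ he ⟨y, w, l⟩ hf (rfl : v = w)
      obtain ⟨-, rfl, rfl, -⟩ := Finset.mem_filter.mp he
      obtain ⟨-, rfl, rfl, -⟩ := Finset.mem_filter.mp hf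
      rfl
    · intro v hv
      exact ⟨(u, v, t₀), Finset.mem_filter.mpr
        ⟨mem_oscGraph_events.mpr ⟨ht.1, ht.2, hv⟩, rfl, rfl, ht.2⟩, rfl⟩
  · rw [if_neg ht]
    refine Finset.card_eq_zero.mpr (Finset.filter_eq_empty_iff.mpr ?_)
    rintro ⟨x, v, m⟩ he ⟨-, rfl, hm⟩
    exact ht ⟨(mem_oscGraph_events.mp he).1, hm⟩

lemma cslNbrs_iso_of_oscGraph_iso {a b n : ℕ} (hn : 1 ≤ n) (π : Equiv.Perm (ZMod N))
    (hπ : ∀ (u v : ZMod N) (m : ℕ), (u, v, m) ∈ (oscGraph N a b n).events ↔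
      (π u, π v, m) ∈ (oscGraph N b a n).events)
    (u v : ZMod N) : v ∈ cslNbrs a u ↔ π v ∈ cslNbrs b (π u) := by
  simpa [mem_oscGraph_events, hn] using hπ u v 1

end OscillatingCSL

theorem stmt5_general (N s₁ s₂ n : ℕ) [NeZero N] (hn : 2 ≤ n)
    (hcard : ∀ u v : ZMod N, (cslNbrs (N := N) s₁ u).card = (cslNbrs (N := N) s₂ v).card)
    (hstatic : ¬ ∃ π : Equiv.Perm (ZMod N), ∀ u v : ZMod N,
        v ∈ cslNbrs (N := N) s₁ u ↔ π v ∈ cslNbrs (N := N) s₂ (π u)) :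
    (¬ ∃ π : Equiv.Perm (ZMod N), ∀ (u v : ZMod N) (m : ℕ),
        (u, v, m) ∈ (oscGraph N s₁ s₂ n).events ↔
          (π u, π v, m) ∈ (oscGraph N s₂ s₁ n).events) ∧
    (∀ u u' : ZMod N,
        (nbrs (oscGraph N s₁ s₂ n) n u).map Prod.snd
          = (nbrs (oscGraph N s₂ s₁ n) n u').map Prod.snd) ∧
    (∀ (k : ℕ) (u u' : ZMod N),
        wlColor (oscGraph N s₁ s₂ n) n k u = wlColor (oscGraph N s₂ s₁ n) n k u') := by
  have htimes : ∀ u u' : ZMod N,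
      (nbrs (oscGraph N s₁ s₂ n) n u).map Prod.snd
        = (nbrs (oscGraph N s₂ s₁ n) n u').map Prod.snd := by
    intro u u'
    ext t₀
    simp only [count_map_snd_nbrs_oscGraph]
    split_ifs
    · exact hcard u u'
    · exact (hcard u' u).symm
    · rfl
  refine ⟨?_, htimes, wlColor_eq_of_map_snd_nbrs_eq _ _ n htimes⟩
  rintro ⟨π, hπ⟩
  exact hstatic ⟨π, cslNbrs_iso_of_oscGraph_iso (by omega) π hπ⟩

/-- The two Oscillating CSL temporal graphs (C_{N,s₁} → C_{N,s₂} → … versus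
C_{N,s₂} → C_{N,s₁} → …) are non-isomorphic as temporal graphs, yet every node in the
first and every node in the second have the same multiset of event timestamps, and
Temporal 1-WL assigns all nodes of both graphs the same color at every iteration,
hence declares them indistinguishable. -/
theorem stmt5 (N s₁ s₂ n : ℕ) [NeZero N] (hs : s₁ ≠ s₂) (hn : 2 ≤ n)
    (hcard : ∀ u v : ZMod N, (cslNbrs (N := N) s₁ u).card = (cslNbrs (N := N) s₂ v).card)
    (hstatic : ¬ ∃ π : Equiv.Perm (ZMod N), ∀ u v : ZMod N,
        v ∈ cslNbrs (N := N) s₁ u ↔ π v ∈ cslNbrs (N := N) s₂ (π u)) :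
    (¬ ∃ π : Equiv.Perm (ZMod N), ∀ (u v : ZMod N) (m : ℕ),
        (u, v, m) ∈ (oscGraph N s₁ s₂ n).events ↔
          (π u, π v, m) ∈ (oscGraph N s₂ s₁ n).events) ∧
    (∀ u u' : ZMod N,
        (nbrs (oscGraph N s₁ s₂ n) n u).map Prod.snd
          = (nbrs (oscGraph N s₂ s₁ n) n u').map Prod.snd) ∧
    (∀ (k : ℕ) (u u' : ZMod N),
        wlColor (oscGraph N s₁ s₂ n) n k u = wlColor (oscGraph N s₂ s₁ n) n k u') :=
  stmt5_general N s₁ s₂ n hn hcard hstatic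
end

section
/- There exists a pair of isomorphic temporal graphs for which a model augmented with permutation-sensitive positional features (counting length-1 walks per labeled node pair, as in PINT-pos) outputs non-isomorphic: specifically, at time t_1 the temporal graphs given by one snapshot of C_{7,2} and one snapshot of C_{7,3} (both with zero attributes) are isomorphic, but no row permutation π satisfies π · Pos(G_1) = Pos(G_2) where Pos(G) is the adjacency matrix; hence the injective model applied to these positional features distinguishes the graphs. -/
/-!
Multiplication by the unit `3` of `ZMod 7` maps the offsets `{±1, ±2}` of `C_{7,2}` onto the
offsets `{±3, ±1}` of `C_{7,3}`, so it is an isomorphism. A row permutation alone, however,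
leaves the column labels fixed: each row of the adjacency matrix of `C_{7,3}` would have to be
literally a row of that of `C_{7,2}`, and the row `{±1, ±3}` of node `0` is not.
-/

/-- Adjacency of the circular skip link graph C_{7,s} under the fixed clockwise node
labeling by `ZMod 7`: `i` and `j` are adjacent iff they differ by `±1` or `±s`. -/
def cslAdj (s : ℕ) (i j : ZMod 7) : Prop :=
  j = i + 1 ∨ j = i - 1 ∨ j = i + (s : ZMod 7) ∨ j = i - (s : ZMod 7)

instance (s : ℕ) (i j : ZMod 7) : Decidable (cslAdj s i j) := by
  unfold cslAdj; infer_instance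

def cslOffsets (s : ℕ) : Finset (ZMod 7) := {1, -1, (s : ZMod 7), -(s : ZMod 7)}

theorem cslAdj_iff_sub_mem_cslOffsets {s : ℕ} {i j : ZMod 7} :
    cslAdj s i j ↔ j - i ∈ cslOffsets s := by
  simp only [cslAdj, cslOffsets, Finset.mem_insert, Finset.mem_singleton, sub_eq_iff_eq_add']
  simp only [sub_eq_add_neg]

theorem cslAdj_mul_iff {s t : ℕ} (u : (ZMod 7)ˣ)
    (hu : ∀ d, d ∈ cslOffsets s ↔ ↑u * d ∈ cslOffsets t) (i j : ZMod 7) :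
    cslAdj s i j ↔ cslAdj t (u * i) (u * j) := by
  rw [cslAdj_iff_sub_mem_cslOffsets, cslAdj_iff_sub_mem_cslOffsets, ← mul_sub, hu]

theorem mem_cslOffsets_two_iff_three_mul_mem_cslOffsets_three (d : ZMod 7) :
    d ∈ cslOffsets 2 ↔ 3 * d ∈ cslOffsets 3 := by
  revert d; decide

-- The neighbours of `x` in `C_{7,2}` sum to `4 * x`, so only `x = 0` could match the row
-- `{±1, ±3}`, whose sum is `0`; and `{±1, ±2} ≠ {±1, ±3}`.
theorem not_forall_cslAdj_two_iff_cslAdj_three_zero (x : ZMod 7) :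
    ¬ ∀ j, cslAdj 2 x j ↔ cslAdj 3 0 j := by
  revert x; decide

/-- The single-snapshot temporal graphs given by C_{7,2} and C_{7,3} (zero attributes)
are isomorphic, but no row permutation `π` satisfies `π · Pos(G₁) = Pos(G₂)` where
`Pos(G)` is the adjacency matrix; hence an injective model applied to these
permutation-sensitive positional features wrongly distinguishes the two graphs
(a false positive of PINT-pos). -/
theorem stmt8 :
    (∃ π : Equiv.Perm (ZMod 7), ∀ i j : ZMod 7, cslAdj 2 i j ↔ cslAdj 3 (π i) (π j)) ∧
    ¬ (∃ π : Equiv.Perm (ZMod 7), ∀ i j : ZMod 7, cslAdj 2 (π i) j ↔ cslAdj 3 i j) := by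
  let three : (ZMod 7)ˣ := ⟨3, 5, by decide, by decide⟩
  refine ⟨⟨Units.mulLeft three, cslAdj_mul_iff three ?_⟩, ?_⟩
  · exact mem_cslOffsets_two_iff_three_mul_mem_cslOffsets_three
  · rintro ⟨π, hπ⟩
    exact not_forall_cslAdj_two_iff_cslAdj_three_zero (π 0) (hπ 0)
end
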